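/- arXiv:1611.02496 — 10 statements merged into one kernel-verified Lean document; each statement's English description precedes it below -/
import Mathlib

section
/- Let C be a nonempty compact convex subset of ℝ². For i = 1,2 let x_i⁻ = min {y_i : y ∈ C} and x_i⁺ = max {y_i : y ∈ C}. Then the component-wise midpoint ((x_1⁻ + x_1⁺)/2, (x_2⁻ + x_2⁺)/2) belongs to C. -/
open Set

theorem componentwise_midpoint_mem_of_convex_compact_R2
    (C : Set (ℝ × ℝ)) (hC : C.Nonempty) (hcomp : IsCompact C) (hconv : Convex ℝ C) :
    ((sInf (Prod.fst '' C) + sSup (Prod.fst '' C)) / 2,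
     (sInf (Prod.snd '' C) + sSup (Prod.snd '' C)) / 2) ∈ C := by
  by_contra hm
  -- compactness of coordinate images
  have h1 : IsCompact (Prod.fst '' C) := hcomp.image continuous_fst
  have h2 : IsCompact (Prod.snd '' C) := hcomp.image continuous_snd
  have hne1 : (Prod.fst '' C).Nonempty := hC.image _
  have hne2 : (Prod.snd '' C).Nonempty := hC.image _
  -- attainment of extrema
  obtain ⟨pxm, hpxm, hpxm1⟩ := h1.sInf_mem hne1
  obtain ⟨pxM, hpxM, hpxM1⟩ := h1.sSup_mem hne1
  obtain ⟨pym, hpym, hpym2⟩ := h2.sInf_mem hne2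
  obtain ⟨pyM, hpyM, hpyM2⟩ := h2.sSup_mem hne2
  -- bounds for all points of C
  have hb1 : BddBelow (Prod.fst '' C) := h1.bddBelow
  have hb2 : BddAbove (Prod.fst '' C) := h1.bddAbove
  have hb3 : BddBelow (Prod.snd '' C) := h2.bddBelow
  have hb4 : BddAbove (Prod.snd '' C) := h2.bddAbove
  have hlo1 : ∀ y ∈ C, sInf (Prod.fst '' C) ≤ y.1 := fun y hy => csInf_le hb1 ⟨y, hy, rfl⟩
  have hhi1 : ∀ y ∈ C, y.1 ≤ sSup (Prod.fst '' C) := fun y hy => le_csSup hb2 ⟨y, hy, rfl⟩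
  have hlo2 : ∀ y ∈ C, sInf (Prod.snd '' C) ≤ y.2 := fun y hy => csInf_le hb3 ⟨y, hy, rfl⟩
  have hhi2 : ∀ y ∈ C, y.2 ≤ sSup (Prod.snd '' C) := fun y hy => le_csSup hb4 ⟨y, hy, rfl⟩
  -- separation
  obtain ⟨f, u, hfm, hfC⟩ := geometric_hahn_banach_point_closed hconv hcomp.isClosed hm
  set a : ℝ := f (1, 0) with ha
  set b : ℝ := f (0, 1) with hb
  have hf : ∀ p : ℝ × ℝ, f p = a * p.1 + b * p.2 := by
    intro p
    have hp : p = p.1 • ((1 : ℝ), (0 : ℝ)) + p.2 • ((0 : ℝ), (1 : ℝ)) := by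
      ext <;> simp
    conv_lhs => rw [hp]
    rw [map_add, map_smul, map_smul, smul_eq_mul, smul_eq_mul, ← ha, ← hb]
    ring
  -- choose minimizing points according to signs of a, b
  set p : ℝ × ℝ := if 0 ≤ a then pxm else pxM with hpdef
  set q : ℝ × ℝ := if 0 ≤ b then pym else pyM with hqdef
  have hpC : p ∈ C := by rw [hpdef]; split <;> assumption
  have hqC : q ∈ C := by rw [hqdef]; split <;> assumption
  set z : ℝ × ℝ := (1/2 : ℝ) • p + (1/2 : ℝ) • q with hz
  have hzC : z ∈ C := hconv hpC hqC (by norm_num) (by norm_num) (by norm_num)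
  have hsep1 := hfC z hzC
  have hfz : f z = (1/2) * (a * p.1 + b * p.2) + (1/2) * (a * q.1 + b * q.2) := by
    rw [hz, map_add, map_smul, map_smul, smul_eq_mul, smul_eq_mul, hf p, hf q]
  -- key estimate: f z ≤ f m
  have key : f z ≤ f ((sInf (Prod.fst '' C) + sSup (Prod.fst '' C)) / 2,
     (sInf (Prod.snd '' C) + sSup (Prod.snd '' C)) / 2) := by
    rw [hfz, hf]
    simp only
    have hap : a * p.1 + a * q.1 ≤ a * sInf (Prod.fst '' C) + a * sSup (Prod.fst '' C) := by
      rcases le_or_gt 0 a with h | h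
      · have hp1 : p.1 = sInf (Prod.fst '' C) := by rw [hpdef, if_pos h]; exact hpxm1
        have hq1 : q.1 ≤ sSup (Prod.fst '' C) := hhi1 q hqC
        rw [hp1]
        nlinarith
      · have hp1 : p.1 = sSup (Prod.fst '' C) := by rw [hpdef, if_neg (not_le.mpr h)]; exact hpxM1
        have hq1 : sInf (Prod.fst '' C) ≤ q.1 := hlo1 q hqC
        rw [hp1]
        nlinarith
    have hbp : b * p.2 + b * q.2 ≤ b * sInf (Prod.snd '' C) + b * sSup (Prod.snd '' C) := by
      rcases le_or_gt 0 b with h | h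
      · have hq2 : q.2 = sInf (Prod.snd '' C) := by rw [hqdef, if_pos h]; exact hpym2
        have hp2 : p.2 ≤ sSup (Prod.snd '' C) := hhi2 p hpC
        rw [hq2]
        nlinarith
      · have hq2 : q.2 = sSup (Prod.snd '' C) := by rw [hqdef, if_neg (not_le.mpr h)]; exact hpyM2
        have hp2 : sInf (Prod.snd '' C) ≤ p.2 := hlo2 p hpC
        rw [hq2]
        nlinarith
    nlinarith
  linarith
end

section
/- Let v_1 ≤ v_2 ≤ … ≤ v_n be real numbers and α ∈ [0, 1/2]. For every real x in the interval [(1−α)v_1 + α v_n, α v_1 + (1−α)v_n], there exist real numbers a_1, …, a_n, each in [α/n, 1], with a_1 + … + a_n = 1 and x = a_1 v_1 + … + a_n v_n. -/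
/-!
Give every index the floor weight `α / n` and put the remaining mass `1 - α` on the two extreme
indices, split as `c + d = 1 - α`. The resulting value is `m + c * v₁ + d * vₙ`, where
`m = (α / n) ∑ vᵢ` lies in `[α v₁, α vₙ]` by monotonicity. As `(c, d)` ranges over the splits,
this sweeps out `m + (1 - α) [v₁, vₙ]`, which contains the interval of the statement.
-/

open Finset

theorem exists_weights_floor_add_two_point {ι : Type*} [Fintype ι] [DecidableEq ι]
    (v : ι → ℝ) {α c d : ℝ} (hα₀ : 0 ≤ α) (hc : 0 ≤ c) (hd : 0 ≤ d) (hcd : c + d = 1 - α)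
    (i j : ι) :
    ∃ a : ι → ℝ, (∀ k, a k ∈ Set.Icc (α / Fintype.card ι) 1) ∧ ∑ k, a k = 1 ∧
      ∑ k, a k * v k = α / Fintype.card ι * ∑ k, v k + c * v i + d * v j := by
  have hcard : (1 : ℝ) ≤ Fintype.card ι := by exact_mod_cast Fintype.card_pos_iff.2 ⟨i⟩
  have hfloor : α / Fintype.card ι ≤ α := div_le_self hα₀ hcard
  refine ⟨fun k => α / Fintype.card ι + (if k = i then c else 0) + (if k = j then d else 0),
    fun k => ⟨?_, ?_⟩, ?_, ?_⟩
  · have := ite_nonneg hc le_rfl (p := k = i)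
    have := ite_nonneg hd le_rfl (p := k = j)
    linarith
  · have : (if k = i then c else 0) ≤ c := by split_ifs <;> linarith
    have : (if k = j then d else 0) ≤ d := by split_ifs <;> linarith
    linarith
  · simp only [sum_add_distrib, sum_ite_eq', mem_univ, if_true, sum_const, card_univ,
      nsmul_eq_mul]
    field_simp
    linarith
  · simp only [add_mul, ite_mul, zero_mul, sum_add_distrib, sum_ite_eq', mem_univ, if_true,
      mul_sum]

section
variable {ι : Type*} [Fintype ι] [Nonempty ι] {v : ι → ℝ} {α b : ℝ}

theorem mul_le_div_card_mul_sum (hα : 0 ≤ α) (hb : ∀ i, b ≤ v i) :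
    α * b ≤ α / Fintype.card ι * ∑ i, v i := by
  have hsum : Fintype.card ι * b ≤ ∑ i, v i := by
    simpa using card_nsmul_le_sum univ v b fun i _ => hb i
  calc α * b = α / Fintype.card ι * (Fintype.card ι * b) := by field_simp
    _ ≤ α / Fintype.card ι * ∑ i, v i := mul_le_mul_of_nonneg_left hsum (by positivity)

theorem div_card_mul_sum_le_mul (hα : 0 ≤ α) (hb : ∀ i, v i ≤ b) :
    α / Fintype.card ι * ∑ i, v i ≤ α * b := by
  have hsum : ∑ i, v i ≤ Fintype.card ι * b := by
    simpa using sum_le_card_nsmul univ v b fun i _ => hb i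
  calc α / Fintype.card ι * ∑ i, v i ≤ α / Fintype.card ι * (Fintype.card ι * b) :=
        mul_le_mul_of_nonneg_left hsum (by positivity)
    _ = α * b := by field_simp

end

theorem safe_value_as_convex_combination_with_lower_bounded_weights
    (n : ℕ) (hn : 1 ≤ n) (v : Fin n → ℝ) (hv : Monotone v)
    (α : ℝ) (hα : α ∈ Set.Icc (0 : ℝ) (1 / 2))
    (x : ℝ)
    (hx : x ∈ Set.Icc ((1 - α) * v ⟨0, hn⟩ + α * v ⟨n - 1, Nat.sub_lt hn one_pos⟩)
                      (α * v ⟨0, hn⟩ + (1 - α) * v ⟨n - 1, Nat.sub_lt hn one_pos⟩)) :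
    ∃ a : Fin n → ℝ, (∀ i, a i ∈ Set.Icc (α / n) 1) ∧
      ∑ i, a i = 1 ∧ x = ∑ i, a i * v i := by
  obtain ⟨hα0, hα1⟩ := hα
  set vmin := v ⟨0, hn⟩
  set vmax := v ⟨n - 1, Nat.sub_lt hn one_pos⟩
  have hmin : ∀ i, vmin ≤ v i := fun i => hv (Fin.le_def.2 (Nat.zero_le _))
  have hmax : ∀ i, v i ≤ vmax := fun i => hv (Fin.le_def.2 (by simp; omega))
  have : Nonempty (Fin n) := ⟨⟨0, hn⟩⟩
  have hm_lo := mul_le_div_card_mul_sum hα0 hmin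
  have hm_hi := div_card_mul_sum_le_mul hα0 hmax
  simp only [Fintype.card_fin] at hm_lo hm_hi
  set m := α / n * ∑ i, v i
  obtain ⟨s, t, hs, ht, hst, hxm⟩ : x - m ∈ segment ℝ ((1 - α) * vmin) ((1 - α) * vmax) :=
    Icc_subset_segment ⟨by linarith [hx.1], by linarith [hx.2]⟩
  obtain ⟨a, ha, hsum, hval⟩ := exists_weights_floor_add_two_point v (c := s * (1 - α))
    (d := t * (1 - α)) hα0 (by nlinarith) (by nlinarith)
    (by linear_combination (1 - α) * hst) ⟨0, hn⟩ ⟨n - 1, Nat.sub_lt hn one_pos⟩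
  simp only [Fintype.card_fin] at ha hval
  refine ⟨a, ha, hsum, ?_⟩
  simp only [smul_eq_mul] at hxm
  linear_combination -hxm - hval
end

section
/- Let v = (v_1,…,v_n) ∈ ℝⁿ with v_1 ≤ … ≤ v_n, α ∈ [0,1/2], and let S_n^α·v = {a_1 v_1 + … + a_n v_n : a_i ∈ [α/n,1], Σ a_i = 1}. Then S_n^α·v equals the closed interval [α·v̄ + (1−α)·v_1, α·v̄ + (1−α)·v_n], where v̄ = (v_1 + … + v_n)/n. -/
open Finset

theorem simplex_alpha_image_eq_Icc
    (n : ℕ) (hn : 1 ≤ n) (v : Fin n → ℝ) (hv : Monotone v)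
    (α : ℝ) (hα : α ∈ Set.Icc (0 : ℝ) (1 / 2)) :
    {x : ℝ | ∃ a : Fin n → ℝ, (∀ i, a i ∈ Set.Icc (α / n) 1) ∧
        ∑ i, a i = 1 ∧ x = ∑ i, a i * v i} =
      Set.Icc (α * ((∑ i, v i) / n) + (1 - α) * v ⟨0, hn⟩)
              (α * ((∑ i, v i) / n) + (1 - α) * v ⟨n - 1, Nat.sub_lt hn one_pos⟩) := by
  obtain ⟨hα0, hα2⟩ := hα
  set i0 : Fin n := ⟨0, hn⟩ with hi0
  set iN : Fin n := ⟨n - 1, Nat.sub_lt hn one_pos⟩ with hiN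
  have hn' : (0:ℝ) < n := by exact_mod_cast hn
  have hv0 : ∀ i, v i0 ≤ v i := fun i => hv (by simp [hi0, Fin.le_def])
  have hvN : ∀ i, v i ≤ v iN := fun i => hv (by simp [hiN, Fin.le_def]; omega)
  have hαn : α / n ≤ α := by
    rw [div_le_iff₀ hn']
    have hn1 : (1:ℝ) ≤ n := by exact_mod_cast hn
    nlinarith [mul_nonneg hα0 (by linarith : (0:ℝ) ≤ (n:ℝ) - 1)]
  have h1α : (0:ℝ) ≤ 1 - α := by linarith
  have hmean : ∑ i, (α/n) * v i = α * ((∑ i, v i)/n) := by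
    rw [← Finset.mul_sum]; ring
  have hcard : ∑ _i : Fin n, (α/(n:ℝ)) = α := by
    rw [Finset.sum_const, Finset.card_univ, Fintype.card_fin, nsmul_eq_mul]
    field_simp
  ext x
  simp only [Set.mem_setOf_eq, Set.mem_Icc]
  constructor
  · rintro ⟨a, ha, hsum, rfl⟩
    have hsum' : ∑ i, (a i - α/n) = 1 - α := by
      rw [Finset.sum_sub_distrib, hsum, hcard]
    have h2 : ∑ i, a i * v i = ∑ i, (α/n) * v i + ∑ i, (a i - α/n) * v i := by
      rw [← Finset.sum_add_distrib]
      exact Finset.sum_congr rfl fun i _ => by ring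
    rw [h2, hmean]
    constructor
    · have h1 : ∑ i, (a i - α/n) * v i0 ≤ ∑ i, (a i - α/n) * v i :=
        Finset.sum_le_sum fun i _ =>
          mul_le_mul_of_nonneg_left (hv0 i) (by linarith [(ha i).1])
      rw [← Finset.sum_mul, hsum'] at h1
      linarith
    · have h1 : ∑ i, (a i - α/n) * v i ≤ ∑ i, (a i - α/n) * v iN :=
        Finset.sum_le_sum fun i _ =>
          mul_le_mul_of_nonneg_left (hvN i) (by linarith [(ha i).1])
      rw [← Finset.sum_mul, hsum'] at h1
      linarith
  · rintro ⟨hx1, hx2⟩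
    set s : ℝ := x - (α * ((∑ i, v i)/n) + (1-α) * v i0) with hs
    set D : ℝ := (1-α) * (v iN - v i0) with hD
    have hs0 : 0 ≤ s := by simp [hs]; linarith
    have hsD : s ≤ D := by simp [hs, hD]; linarith
    obtain ⟨t, ht0, ht1, htD⟩ : ∃ t : ℝ, 0 ≤ t ∧ t ≤ 1 ∧ t * D = s := by
      by_cases hD0 : D = 0
      · exact ⟨0, le_refl 0, zero_le_one, by rw [zero_mul]; linarith⟩
      · have hDpos : 0 < D := lt_of_le_of_ne (le_trans hs0 hsD) (Ne.symm hD0)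
        exact ⟨s / D, div_nonneg hs0 hDpos.le, (div_le_one hDpos).mpr hsD,
          div_mul_cancel₀ s hD0⟩
    set w : Fin n → ℝ := fun i =>
      (if i = i0 then 1 - t else 0) + (if i = iN then t else 0) with hw
    have hw0 : ∀ i, 0 ≤ w i := fun i => by
      simp only [hw]; split_ifs <;> linarith
    have hw1 : ∀ i, w i ≤ 1 := fun i => by
      simp only [hw]; split_ifs <;> linarith
    have hwsum : ∑ i, w i = 1 := by
      simp [hw, Finset.sum_add_distrib, Finset.sum_ite_eq']
    have hwv : ∑ i, w i * v i = (1 - t) * v i0 + t * v iN := by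
      simp only [hw, add_mul, ite_mul, zero_mul]
      rw [Finset.sum_add_distrib]
      simp [Finset.sum_ite_eq']
    clear_value w
    refine ⟨fun i => α/n + (1-α) * w i, fun i => ⟨?_, ?_⟩, ?_, ?_⟩
    · simp only
      nlinarith [mul_nonneg h1α (hw0 i)]
    · simp only
      have := mul_le_of_le_one_right h1α (hw1 i)
      linarith
    · rw [Finset.sum_add_distrib, hcard, ← Finset.mul_sum, hwsum]; ring
    · have : ∑ i, (α/n + (1-α) * w i) * v i
          = ∑ i, (α/n) * v i + (1-α) * ∑ i, w i * v i := by
        rw [Finset.mul_sum, ← Finset.sum_add_distrib]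
        exact Finset.sum_congr rfl fun i _ => by ring
      rw [this, hmean, hwv]
      have hxeq : x = α * ((∑ i, v i)/n) + (1-α) * v i0 + s := by simp [hs]
      rw [hxeq, ← htD, hD]
      ring
end

section
/- Let ℓ, ℓ' : ℝ → ℝ≥0 be measurable functions with finite positive integrals of ℓ^{d−1} and ℓ'^{d−1}, and let c = (∫ ξ·ℓ(ξ)^{d−1} dξ)/(∫ ℓ(ξ)^{d−1} dξ) be the weighted center with density ℓ^{d−1}. If ℓ'(ξ) ≤ ℓ(ξ) for all ξ ≤ c and ℓ'(ξ) = ℓ(ξ) for all ξ > c, then the weighted center c' = (∫ ξ·ℓ'(ξ)^{d−1} dξ)/(∫ ℓ'(ξ)^{d−1} dξ) satisfies c' ≥ c. -/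
/-!
Relative to c, the first moment of ℓ^{d-1} vanishes: ∫ (ξ - c) ℓ(ξ)^{d-1} = 0. Lowering the density
only where ξ - c ≤ 0 can only increase ∫ (ξ - c) ℓ'(ξ)^{d-1} = (c' - c) ∫ ℓ'(ξ)^{d-1}, so c' ≥ c.
-/

open MeasureTheory

noncomputable def weightedCenter (w : ℝ → ℝ) : ℝ :=
  (∫ ξ, ξ * w ξ) / ∫ ξ, w ξ

section WeightedCenter

variable {w w' : ℝ → ℝ}

theorem integrable_sub_mul (hw : Integrable w) (hxw : Integrable fun ξ => ξ * w ξ) (c : ℝ) :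
    Integrable fun ξ => (ξ - c) * w ξ := by
  simp_rw [sub_mul]
  exact hxw.sub (hw.const_mul c)

theorem integral_sub_mul_eq (hw : Integrable w) (hxw : Integrable fun ξ => ξ * w ξ) (c : ℝ) :
    ∫ ξ, (ξ - c) * w ξ = (∫ ξ, ξ * w ξ) - c * ∫ ξ, w ξ := by
  simp_rw [sub_mul]
  rw [integral_sub hxw (hw.const_mul c), integral_const_mul]

theorem integral_sub_weightedCenter_mul (hw : Integrable w)
    (hxw : Integrable fun ξ => ξ * w ξ) (hmass : (∫ ξ, w ξ) ≠ 0) :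
    ∫ ξ, (ξ - weightedCenter w) * w ξ = 0 := by
  rw [integral_sub_mul_eq hw hxw, weightedCenter, div_mul_cancel₀ _ hmass, sub_self]

theorem le_weightedCenter_iff (hw : Integrable w) (hxw : Integrable fun ξ => ξ * w ξ)
    (hpos : 0 < ∫ ξ, w ξ) (c : ℝ) :
    c ≤ weightedCenter w ↔ 0 ≤ ∫ ξ, (ξ - c) * w ξ := by
  rw [integral_sub_mul_eq hw hxw, weightedCenter, le_div_iff₀ hpos, sub_nonneg]

theorem weightedCenter_le_weightedCenter (hw : Integrable w) (hw' : Integrable w')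
    (hxw : Integrable fun ξ => ξ * w ξ) (hxw' : Integrable fun ξ => ξ * w' ξ)
    (hmass : (∫ ξ, w ξ) ≠ 0) (hpos' : 0 < ∫ ξ, w' ξ)
    (hle : ∀ ξ ≤ weightedCenter w, w' ξ ≤ w ξ) (hge : ∀ ξ > weightedCenter w, w ξ ≤ w' ξ) :
    weightedCenter w ≤ weightedCenter w' := by
  set c := weightedCenter w
  have hmoment : ∀ ξ, (ξ - c) * w ξ ≤ (ξ - c) * w' ξ := by
    intro ξ
    rcases le_or_gt ξ c with h | h
    · exact mul_le_mul_of_nonpos_left (hle ξ h) (sub_nonpos.mpr h)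
    · exact mul_le_mul_of_nonneg_left (hge ξ h) (sub_nonneg.mpr h.le)
  rw [le_weightedCenter_iff hw' hxw' hpos', ← integral_sub_weightedCenter_mul hw hxw hmass]
  exact integral_mono (integrable_sub_mul hw hxw c) (integrable_sub_mul hw' hxw' c) hmoment

end WeightedCenter

theorem weighted_center_shift_general
    (d : ℕ) (ℓ ℓ' : ℝ → ℝ)
    (hℓ'0 : ∀ ξ, 0 ≤ ℓ' ξ)
    (hint : Integrable (fun ξ => ℓ ξ ^ (d - 1)))
    (hint' : Integrable (fun ξ => ℓ' ξ ^ (d - 1)))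
    (hxint : Integrable (fun ξ => ξ * ℓ ξ ^ (d - 1)))
    (hxint' : Integrable (fun ξ => ξ * ℓ' ξ ^ (d - 1)))
    (hpos : 0 < ∫ ξ, ℓ ξ ^ (d - 1))
    (hpos' : 0 < ∫ ξ, ℓ' ξ ^ (d - 1))
    (c : ℝ) (hc : c = (∫ ξ, ξ * ℓ ξ ^ (d - 1)) / (∫ ξ, ℓ ξ ^ (d - 1)))
    (hle : ∀ ξ ≤ c, ℓ' ξ ≤ ℓ ξ)
    (heq : ∀ ξ > c, ℓ' ξ = ℓ ξ) :
    c ≤ (∫ ξ, ξ * ℓ' ξ ^ (d - 1)) / (∫ ξ, ℓ' ξ ^ (d - 1)) := by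
  have hc : c = weightedCenter fun ξ => ℓ ξ ^ (d - 1) := hc
  subst hc
  exact weightedCenter_le_weightedCenter hint hint' hxint hxint' hpos.ne' hpos'
    (fun ξ hξ => pow_le_pow_left₀ (hℓ'0 ξ) (hle ξ hξ) _)
    (fun ξ hξ => by rw [heq ξ hξ])

theorem weighted_center_shift
    (d : ℕ) (hd : 1 ≤ d) (ℓ ℓ' : ℝ → ℝ)
    (hℓ0 : ∀ ξ, 0 ≤ ℓ ξ) (hℓ'0 : ∀ ξ, 0 ≤ ℓ' ξ)
    (hmeas : Measurable ℓ) (hmeas' : Measurable ℓ')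
    (hint : Integrable (fun ξ => ℓ ξ ^ (d - 1)))
    (hint' : Integrable (fun ξ => ℓ' ξ ^ (d - 1)))
    (hxint : Integrable (fun ξ => ξ * ℓ ξ ^ (d - 1)))
    (hxint' : Integrable (fun ξ => ξ * ℓ' ξ ^ (d - 1)))
    (hpos : 0 < ∫ ξ, ℓ ξ ^ (d - 1))
    (hpos' : 0 < ∫ ξ, ℓ' ξ ^ (d - 1))
    (c : ℝ) (hc : c = (∫ ξ, ξ * ℓ ξ ^ (d - 1)) / (∫ ξ, ℓ ξ ^ (d - 1)))
    (hle : ∀ ξ ≤ c, ℓ' ξ ≤ ℓ ξ)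
    (heq : ∀ ξ > c, ℓ' ξ = ℓ ξ) :
    c ≤ (∫ ξ, ξ * ℓ' ξ ^ (d - 1)) / (∫ ξ, ℓ' ξ ^ (d - 1)) :=
  weighted_center_shift_general d ℓ ℓ' hℓ'0 hint hint' hxint hxint' hpos hpos' c hc hle heq
end

section
/- Let A ⊆ ℝ^d be a compact convex set with positive volume. Then for every coordinate j ∈ {1,…,d}, the j-th centroid coordinate satisfies (1/(d+1))·M_j(A) + (d/(d+1))·m_j(A) ≤ centroid_j(A) ≤ (1/(d+1))·m_j(A) + (d/(d+1))·M_j(A), where m_j(A) = min_{x∈A} x_j and M_j(A) = max_{x∈A} x_j. -/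
open MeasureTheory Set Module

/-! Let `φ` be concave and continuous on a compact convex `A` in an `n`-dimensional space,
with `φ ≥ m` on `A`, and let `p ∈ A`, `w = φ p - m`. By concavity the homothety of ratio
`r ∈ [0, 1]` centred at `p` maps `A` into `A ∩ {φ - m ≥ (1 - r) w}`, so this superlevel set has
measure at least `rⁿ μ A`. The layer-cake formula then gives
`∫_A (φ - m) ≥ μ A ∫₀^w (1 - t/w)ⁿ dt = μ A w / (n + 1)`. Applying this to `φ = x_j` and to `φ = -x_j`, with `p` ranging over `A`, bounds the extreme values
of `x_j` on `A` in terms of its average. -/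

theorem integral_one_sub_div_pow (w : ℝ) (n : ℕ) :
    ∫ t in (0 : ℝ)..w, (1 - t / w) ^ n = w / (n + 1) := by
  rcases eq_or_ne w 0 with rfl | hw
  · simp
  rw [intervalIntegral.integral_comp_div (fun s => (1 - s) ^ n) hw,
    intervalIntegral.integral_comp_sub_left (fun s => s ^ n) 1, integral_pow]
  simp [div_self hw]
  field_simp

section

variable {E : Type*} [NormedAddCommGroup E] [NormedSpace ℝ E] [MeasurableSpace E] [BorelSpace E]
  [FiniteDimensional ℝ E] (μ : Measure E) [μ.IsAddHaarMeasure] {A : Set E} {φ : E → ℝ} {p : E} {m : ℝ}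

theorem ConcaveOn.ofReal_pow_mul_measure_le_restrict_superlevel (hφ : ConcaveOn ℝ A φ)
    (hp : p ∈ A) (hm : ∀ x ∈ A, m ≤ φ x) {r : ℝ} (hr0 : 0 ≤ r) (hr1 : r ≤ 1) :
    ENNReal.ofReal (r ^ finrank ℝ E) * μ A ≤
      μ.restrict A {x | (1 - r) * (φ p - m) ≤ φ x - m} := by
  have hsub : AffineMap.homothety p r '' A ⊆ {x | (1 - r) * (φ p - m) ≤ φ x - m} ∩ A := by
    rintro _ ⟨x, hx, rfl⟩
    have hxp : AffineMap.homothety p r x = r • x + (1 - r) • p := by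
      rw [AffineMap.homothety_apply, vsub_eq_sub, vadd_eq_add]
      module
    rw [hxp]
    have hr : r + (1 - r) = 1 := add_sub_cancel r 1
    have hconc := hφ.2 hx hp hr0 (sub_nonneg.2 hr1) hr
    simp only [smul_eq_mul] at hconc
    refine ⟨?_, hφ.1 hx hp hr0 (sub_nonneg.2 hr1) hr⟩
    show (1 - r) * (φ p - m) ≤ φ _ - m
    nlinarith [mul_le_mul_of_nonneg_left (hm x hx) hr0]
  calc ENNReal.ofReal (r ^ finrank ℝ E) * μ A = μ (AffineMap.homothety p r '' A) := by
        rw [Measure.addHaar_image_homothety, abs_of_nonneg (by positivity)]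
    _ ≤ μ ({x | (1 - r) * (φ p - m) ≤ φ x - m} ∩ A) := measure_mono hsub
    _ ≤ _ := Measure.le_restrict_apply _ _

theorem ConcaveOn.measureReal_mul_div_le_setIntegral_sub (hA : IsCompact A)
    (hφ : ConcaveOn ℝ A φ) (hφc : ContinuousOn φ A) (hp : p ∈ A) (hm : ∀ x ∈ A, m ≤ φ x) :
    μ.real A * ((φ p - m) / (finrank ℝ E + 1)) ≤ ∫ x in A, (φ x - m) ∂μ := by
  set w := φ p - m
  have hint : IntegrableOn (fun x => φ x - m) A μ :=
    (hφc.sub continuousOn_const).integrableOn_compact hA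
  have hnn : 0 ≤ᵐ[μ.restrict A] fun x => φ x - m :=
    (ae_restrict_mem hA.measurableSet).mono fun x hx => sub_nonneg.2 (hm x hx)
  have hI : 0 ≤ ∫ x in A, (φ x - m) ∂μ := integral_nonneg_of_ae hnn
  rcases le_or_gt w 0 with hw | hw
  · exact (mul_nonpos_of_nonneg_of_nonpos measureReal_nonneg
      (div_nonpos_of_nonpos_of_nonneg hw (by positivity))).trans hI
  have hr0 : ∀ t ∈ Ioc 0 w, 0 ≤ 1 - t / w := fun t ht => sub_nonneg.2 ((div_le_one hw).2 ht.2)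
  have hlayer : ENNReal.ofReal (w / (finrank ℝ E + 1)) * μ A ≤
      ∫⁻ x in A, ENNReal.ofReal (φ x - m) ∂μ :=
    calc ENNReal.ofReal (w / (finrank ℝ E + 1)) * μ A
        = (∫⁻ t in Ioc 0 w, ENNReal.ofReal ((1 - t / w) ^ finrank ℝ E)) * μ A := by
          rw [← ofReal_integral_eq_lintegral_ofReal, ← intervalIntegral.integral_of_le hw.le,
            integral_one_sub_div_pow]
          · exact (continuous_const.sub (continuous_id.div_const w)).pow _ |>.integrableOn_Ioc
          · exact ae_restrict_of_forall_mem measurableSet_Ioc fun t ht => pow_nonneg (hr0 t ht) _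
      _ = ∫⁻ t in Ioc 0 w, ENNReal.ofReal ((1 - t / w) ^ finrank ℝ E) * μ A :=
          (lintegral_mul_const _ (by fun_prop)).symm
      _ ≤ ∫⁻ t in Ioc 0 w, μ.restrict A {x | t ≤ φ x - m} := by
          refine setLIntegral_mono' measurableSet_Ioc fun t ht => ?_
          have hr1 : 1 - t / w ≤ 1 := sub_le_self _ (div_nonneg ht.1.le hw.le)
          have ht' : (1 - (1 - t / w)) * (φ p - m) = t := by field_simp; ring
          have := hφ.ofReal_pow_mul_measure_le_restrict_superlevel μ hp hm (hr0 t ht) hr1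
          rwa [ht'] at this
      _ ≤ ∫⁻ t in Ioi 0, μ.restrict A {x | t ≤ φ x - m} := lintegral_mono_set Ioc_subset_Ioi_self
      _ = ∫⁻ x in A, ENNReal.ofReal (φ x - m) ∂μ :=
          (lintegral_eq_lintegral_meas_le _ hnn hint.aemeasurable).symm
  rw [← ofReal_integral_eq_lintegral_ofReal hint hnn, ← ofReal_measureReal hA.measure_lt_top.ne,
    ← ENNReal.ofReal_mul (by positivity), ENNReal.ofReal_le_ofReal_iff hI, mul_comm] at hlayer
  exact hlayer

theorem ConcaveOn.le_add_mul_setIntegral_div_sub (hA : IsCompact A) (hA0 : μ A ≠ 0)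
    (hφ : ConcaveOn ℝ A φ) (hφc : ContinuousOn φ A) (hp : p ∈ A) (hm : ∀ x ∈ A, m ≤ φ x) :
    φ p ≤ m + (finrank ℝ E + 1) * ((∫ x in A, φ x ∂μ) / μ.real A - m) := by
  have hV : 0 < μ.real A := ENNReal.toReal_pos hA0 hA.measure_lt_top.ne
  have h := hφ.measureReal_mul_div_le_setIntegral_sub μ hA hφc hp hm
  rw [integral_sub (hφc.integrableOn_compact hA) (integrableOn_const hA.measure_lt_top.ne),
    setIntegral_const, smul_eq_mul] at h
  field_simp at h ⊢
  linarith

end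

theorem centroid_safeness_of_convex_body
    (d : ℕ) (A : Set (Fin d → ℝ))
    (hcomp : IsCompact A) (hconv : Convex ℝ A) (hvol : 0 < volume A)
    (j : Fin d) :
    (1 / ((d : ℝ) + 1)) * sSup ((fun x => x j) '' A) +
        ((d : ℝ) / ((d : ℝ) + 1)) * sInf ((fun x => x j) '' A) ≤
      (∫ x in A, x j) / (volume A).toReal ∧
    (∫ x in A, x j) / (volume A).toReal ≤
      (1 / ((d : ℝ) + 1)) * sInf ((fun x => x j) '' A) +
        ((d : ℝ) / ((d : ℝ) + 1)) * sSup ((fun x => x j) '' A) := by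
  set B := (fun x : Fin d → ℝ => x j) '' A
  set c := (∫ x in A, x j) / volume.real A
  have hB : IsCompact B := hcomp.image (continuous_apply j)
  have hne : B.Nonempty := (nonempty_of_measure_ne_zero hvol.ne').image _
  have hfin : (finrank ℝ (Fin d → ℝ) : ℝ) = d := by rw [finrank_fin_fun]
  have hsup : sSup B ≤ sInf B + (d + 1) * (c - sInf B) := by
    refine csSup_le hne ?_
    rintro _ ⟨p, hp, rfl⟩
    have := ((LinearMap.proj j).concaveOn hconv).le_add_mul_setIntegral_div_sub volume hcomp
      hvol.ne' (continuous_apply j).continuousOn hp fun x hx => csInf_le hB.bddBelow ⟨x, hx, rfl⟩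
    rwa [hfin] at this
  have hinf : sSup B - (d + 1) * (sSup B - c) ≤ sInf B := by
    refine le_csInf hne ?_
    rintro _ ⟨p, hp, rfl⟩
    have := ((-LinearMap.proj j).concaveOn hconv).le_add_mul_setIntegral_div_sub volume hcomp
      hvol.ne' (continuous_apply j).neg.continuousOn hp
      fun x hx => neg_le_neg (le_csSup hB.bddAbove ⟨x, hx, rfl⟩)
    simp only [LinearMap.neg_apply, LinearMap.proj_apply, integral_neg, neg_div, hfin] at this
    change _ ≤ p j
    linarith
  show _ ≤ c ∧ c ≤ _
  constructor
  · field_simp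
    linarith
  · field_simp
    linarith
end

section
/- If G₁, …, G_{n−1} are directed graphs on vertex set [n], each containing a self-loop at every vertex and each having a rooted spanning tree (i.e., some vertex from which every vertex is reachable), then the composed graph G₁ ∘ G₂ ∘ ⋯ ∘ G_{n−1} is nonsplit: every two vertices have a common in-neighbor. -/
/-- Composition of a chain of relations: `relChain E 0 = Eq` and
`relChain E (k+1) = (E 0) ∘ relChain (E ∘ (·+1)) k`, where the product of
two graphs `G ∘ H` has an edge `(p,q)` iff there is `r` with `(p,r) ∈ G`
and `(r,q) ∈ H`. -/
def relChain {V : Type*} : (ℕ → V → V → Prop) → ℕ → (V → V → Prop)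
  | _, 0 => Eq
  | E, k + 1 => Relation.Comp (E 0) (relChain (fun i => E (i + 1)) k)

lemma relChain_snoc {V : Type*} :
    ∀ (k : ℕ) (E : ℕ → V → V → Prop),
      relChain E (k + 1) = Relation.Comp (relChain E k) (E k) := by
  intro k
  induction k with
  | zero =>
    intro E
    funext a b
    simp [relChain, Relation.Comp]
  | succ k ih =>
    intro E
    show Relation.Comp (E 0) (relChain (fun i => E (i+1)) (k+1)) = _
    rw [ih (fun i => E (i+1))]
    rw [← Relation.comp_assoc]
    rfl

lemma closed_root {n : ℕ} {R : Fin n → Fin n → Prop} {A : Finset (Fin n)}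
    (hA : ∀ x y, y ∈ A → R x y → x ∈ A) {s v : Fin n}
    (h : Relation.ReflTransGen R s v) (hv : v ∈ A) : s ∈ A := by
  induction h with
  | refl => exact hv
  | tail _ h2 ih => exact ih (hA _ _ hv h2)

lemma key {n : ℕ} (E : ℕ → Fin n → Fin n → Prop) :
    ∀ m : ℕ, (∀ i, i < m → ∀ v, E i v v) →
      (∀ i, i < m → ∃ s : Fin n, ∀ v, Relation.ReflTransGen (E i) s v) →
      ∀ A B : Finset (Fin n), A.Nonempty → B.Nonempty →
      (n + 1 ≤ m + (A ∪ B).card ∨ (A ∩ B).Nonempty) →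
      ∃ r, (∃ a ∈ A, relChain E m r a) ∧ (∃ b ∈ B, relChain E m r b) := by
  intro m
  induction m with
  | zero =>
    intro _ _ A B _ _ h
    have hcard : (A ∪ B).card ≤ n := by
      simpa using Finset.card_le_card (Finset.subset_univ (A ∪ B))
    rcases h with h | ⟨r, hr⟩
    · omega
    · simp only [Finset.mem_inter] at hr
      exact ⟨r, ⟨r, hr.1, rfl⟩, ⟨r, hr.2, rfl⟩⟩
  | succ m ih =>
    intro hself hrooted A B hAne hBne h
    classical
    set A' : Finset (Fin n) := Finset.univ.filter (fun x => ∃ a ∈ A, E m x a) with hA'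
    set B' : Finset (Fin n) := Finset.univ.filter (fun x => ∃ b ∈ B, E m x b) with hB'
    have hAsub : A ⊆ A' := by
      intro a ha
      simp only [hA', Finset.mem_filter, Finset.mem_univ, true_and]
      exact ⟨a, ha, hself m (Nat.lt_succ_self m) a⟩
    have hBsub : B ⊆ B' := by
      intro b hb
      simp only [hB', Finset.mem_filter, Finset.mem_univ, true_and]
      exact ⟨b, hb, hself m (Nat.lt_succ_self m) b⟩
    have hcond : (n + 1 ≤ m + (A' ∪ B').card ∨ (A' ∩ B').Nonempty) := by
      rcases h with h | hint
      · by_cases hd : (A' ∩ B').Nonempty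
        · exact Or.inr hd
        · left
          -- show card grows
          have hdisj : ∀ x, x ∈ A' → x ∈ B' → False := by
            intro x hx hy
            exact hd ⟨x, Finset.mem_inter.2 ⟨hx, hy⟩⟩
          have hsub : A ∪ B ⊆ A' ∪ B' :=
            Finset.union_subset_union hAsub hBsub
          have hne : A ∪ B ≠ A' ∪ B' := by
            intro heq
            -- then A' = A and B' = B, both closed under predecessors
            have hA'eq : A' = A := by
              apply Finset.Subset.antisymm _ hAsub
              intro x hx
              have hx' : x ∈ A ∪ B := heq ▸ Finset.mem_union_left B' hx
              rcases Finset.mem_union.1 hx' with h1 | h1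
              · exact h1
              · exact absurd (hdisj x hx (hBsub h1)) (fun f => f)
            have hB'eq : B' = B := by
              apply Finset.Subset.antisymm _ hBsub
              intro x hx
              have hx' : x ∈ A ∪ B := heq ▸ Finset.mem_union_right A' hx
              rcases Finset.mem_union.1 hx' with h1 | h1
              · exact absurd (hdisj x (hAsub h1) hx) (fun f => f)
              · exact h1
            obtain ⟨s, hs⟩ := hrooted m (Nat.lt_succ_self m)
            have hAclosed : ∀ x y, y ∈ A → E m x y → x ∈ A := by
              intro x y hy hxy
              rw [← hA'eq]
              simp only [hA', Finset.mem_filter, Finset.mem_univ, true_and]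
              exact ⟨y, hy, hxy⟩
            have hBclosed : ∀ x y, y ∈ B → E m x y → x ∈ B := by
              intro x y hy hxy
              rw [← hB'eq]
              simp only [hB', Finset.mem_filter, Finset.mem_univ, true_and]
              exact ⟨y, hy, hxy⟩
            obtain ⟨a, ha⟩ := hAne
            obtain ⟨b, hb⟩ := hBne
            have hsA : s ∈ A := closed_root hAclosed (hs a) ha
            have hsB : s ∈ B := closed_root hBclosed (hs b) hb
            exact hdisj s (hAsub hsA) (hBsub hsB)
          have : (A ∪ B).card < (A' ∪ B').card :=
            Finset.card_lt_card (lt_of_le_of_ne hsub hne)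
          omega
      · right
        obtain ⟨x, hx⟩ := hint
        rw [Finset.mem_inter] at hx
        exact ⟨x, Finset.mem_inter.2 ⟨hAsub hx.1, hBsub hx.2⟩⟩
    obtain ⟨r, ⟨a', ha', hra'⟩, ⟨b', hb', hrb'⟩⟩ :=
      ih (fun i hi => hself i (Nat.lt_succ_of_lt hi))
        (fun i hi => hrooted i (Nat.lt_succ_of_lt hi))
        A' B' (hAne.mono hAsub) (hBne.mono hBsub) hcond
    simp only [hA', Finset.mem_filter, Finset.mem_univ, true_and] at ha'
    simp only [hB', Finset.mem_filter, Finset.mem_univ, true_and] at hb'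
    obtain ⟨a, ha, haa⟩ := ha'
    obtain ⟨b, hb, hbb⟩ := hb'
    refine ⟨r, ⟨a, ha, ?_⟩, ⟨b, hb, ?_⟩⟩
    · rw [relChain_snoc]; exact ⟨a', hra', haa⟩
    · rw [relChain_snoc]; exact ⟨b', hrb', hbb⟩

theorem product_of_rooted_graphs_is_nonsplit
    (n : ℕ) (hn : 1 ≤ n) (E : ℕ → Fin n → Fin n → Prop)
    (hself : ∀ i, i < n - 1 → ∀ v, E i v v)
    (hrooted : ∀ i, i < n - 1 → ∃ r : Fin n, ∀ v, Relation.ReflTransGen (E i) r v) :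
    ∀ p q : Fin n, ∃ r : Fin n, relChain E (n - 1) r p ∧ relChain E (n - 1) r q := by
  intro p q
  classical
  have := key E (n - 1) hself hrooted {p} {q} ⟨p, Finset.mem_singleton_self p⟩
    ⟨q, Finset.mem_singleton_self q⟩ ?_
  · obtain ⟨r, ⟨a, ha, hra⟩, ⟨b, hb, hrb⟩⟩ := this
    rw [Finset.mem_singleton] at ha hb
    subst ha hb
    exact ⟨r, hra, hrb⟩
  · by_cases hpq : p = q
    · subst hpq
      exact Or.inr ⟨p, by simp⟩
    · left
      have : ({p} ∪ {q} : Finset (Fin n)).card = 2 := by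
        rw [Finset.card_union_of_disjoint (by simp [hpq, Ne.symm hpq])]
        simp
      omega
end

section
/- Let α ∈ (0, 1/2] and consider a sequence of configurations x(t) ∈ ℝⁿ such that at each round t, for each agent p, x_p(t+1) ∈ [α M_p(t) + (1−α) m_p(t), (1−α) M_p(t) + α m_p(t)], where m_p(t) and M_p(t) are the min and max of {x_q(t) : q ∈ In_p(t+1)} for a nonsplit communication graph G_{t+1}. Then δ(x(t+1)) ≤ (1−α)·δ(x(t)), where δ(u) = max_p u_p − min_p u_p. -/
theorem alpha_safe_contracts_on_nonsplit_graph
    (n : ℕ) (hn : 0 < n) (α : ℝ) (hα : α ∈ Set.Ioc (0 : ℝ) (1 / 2))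
    (In : Fin n → Finset (Fin n))
    (hself : ∀ p, p ∈ In p)
    (hnonsplit : ∀ p q : Fin n, ∃ r, r ∈ In p ∧ r ∈ In q)
    (x x' : Fin n → ℝ)
    (hsafe : ∀ p, x' p ∈ Set.Icc
        (α * sSup (x '' (In p : Set (Fin n))) + (1 - α) * sInf (x '' (In p : Set (Fin n))))
        ((1 - α) * sSup (x '' (In p : Set (Fin n))) + α * sInf (x '' (In p : Set (Fin n))))) :
    sSup (Set.range x') - sInf (Set.range x') ≤
      (1 - α) * (sSup (Set.range x) - sInf (Set.range x)) := by
  obtain ⟨hα0, hα2⟩ := hα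
  have hα1 : (0:ℝ) ≤ 1 - α := by linarith
  have hbddA : BddAbove (Set.range x) := (Set.finite_range x).bddAbove
  have hbddB : BddBelow (Set.range x) := (Set.finite_range x).bddBelow
  set M := sSup (Set.range x) with hM
  set m := sInf (Set.range x) with hm
  have key : ∀ p q, x' p - x' q ≤ (1 - α) * (M - m) := by
    intro p q
    obtain ⟨r, hrp, hrq⟩ := hnonsplit p q
    have hpne : (x '' (In p : Set (Fin n))).Nonempty := ⟨x p, p, hself p, rfl⟩
    have hqne : (x '' (In q : Set (Fin n))).Nonempty := ⟨x q, q, hself q, rfl⟩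
    have hMp : sSup (x '' (In p : Set (Fin n))) ≤ M := by
      apply csSup_le hpne
      rintro a ⟨s, _, rfl⟩
      exact le_csSup hbddA (Set.mem_range_self s)
    have hmq : m ≤ sInf (x '' (In q : Set (Fin n))) := by
      apply le_csInf hqne
      rintro a ⟨s, _, rfl⟩
      exact csInf_le hbddB (Set.mem_range_self s)
    have hmp : sInf (x '' (In p : Set (Fin n))) ≤ x r :=
      csInf_le ((((In p : Set (Fin n)).toFinite).image x).bddBelow) ⟨r, hrp, rfl⟩
    have hMq : x r ≤ sSup (x '' (In q : Set (Fin n))) :=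
      le_csSup ((((In q : Set (Fin n)).toFinite).image x).bddAbove) ⟨r, hrq, rfl⟩
    have h1 := (hsafe p).2
    have h2 := (hsafe q).1
    nlinarith [mul_le_mul_of_nonneg_left hMp hα1,
      mul_le_mul_of_nonneg_left hmp hα0.le,
      mul_le_mul_of_nonneg_left hMq hα0.le,
      mul_le_mul_of_nonneg_left hmq hα1]
  haveI : Nonempty (Fin n) := ⟨⟨0, hn⟩⟩
  have h'ne : (Set.range x').Nonempty := Set.range_nonempty x'
  rw [sub_le_iff_le_add]
  apply csSup_le h'ne
  rintro a ⟨p, rfl⟩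
  rw [← sub_le_iff_le_add']
  apply le_csInf h'ne
  rintro b ⟨q, rfl⟩
  linarith [key p q]
end

section
/- Let α ∈ (0,1/2] and let x(t) ∈ ℝⁿ be a sequence such that every agent's new value lies in the convex hull of its in-neighbors' values, each communication graph is nonsplit, and the update is α-safe. Then all sequences x_p(t) converge to a common limit x* lying in [min_p x_p(0), max_p x_p(0)], and for all t, δ(x(t)) ≤ (1−α)^t δ(x(0)). -/
open Filter

theorem alpha_safe_consensus_on_nonsplit_networks
    (n : ℕ) (hn : 0 < n) (α : ℝ) (hα : α ∈ Set.Ioc (0 : ℝ) (1 / 2))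
    (In : ℕ → Fin n → Finset (Fin n))
    (hself : ∀ t p, p ∈ In t p)
    (hnonsplit : ∀ t, ∀ p q : Fin n, ∃ r, r ∈ In t p ∧ r ∈ In t q)
    (x : ℕ → Fin n → ℝ)
    (hhull : ∀ t p, x (t + 1) p ∈ Set.Icc
        (sInf (x t '' (In (t + 1) p : Set (Fin n))))
        (sSup (x t '' (In (t + 1) p : Set (Fin n)))))
    (hsafe : ∀ t p, x (t + 1) p ∈ Set.Icc
        (α * sSup (x t '' (In (t + 1) p : Set (Fin n))) +
          (1 - α) * sInf (x t '' (In (t + 1) p : Set (Fin n))))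
        ((1 - α) * sSup (x t '' (In (t + 1) p : Set (Fin n))) +
          α * sInf (x t '' (In (t + 1) p : Set (Fin n))))) :
    ∃ x_star : ℝ,
      (∀ p, Tendsto (fun t => x t p) atTop (nhds x_star)) ∧
      x_star ∈ Set.Icc (sInf (Set.range (x 0))) (sSup (Set.range (x 0))) ∧
      ∀ t, sSup (Set.range (x t)) - sInf (Set.range (x t)) ≤
        (1 - α) ^ t * (sSup (Set.range (x 0)) - sInf (Set.range (x 0))) := by
  haveI : Nonempty (Fin n) := ⟨⟨0, hn⟩⟩
  obtain ⟨hα0, hα2⟩ := hα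
  have hα1 : α < 1 := lt_of_le_of_lt hα2 (by norm_num)
  have h1α : (0:ℝ) ≤ 1 - α := by linarith
  set m : ℕ → ℝ := fun t => sInf (Set.range (x t)) with hm
  set M : ℕ → ℝ := fun t => sSup (Set.range (x t)) with hM
  have hfin : ∀ t, (Set.range (x t)).Finite := fun t => Set.finite_range _
  have hne : ∀ t, (Set.range (x t)).Nonempty := fun t => Set.range_nonempty _
  have hbdd_b : ∀ t, BddBelow (Set.range (x t)) := fun t => (hfin t).bddBelow
  have hbdd_a : ∀ t, BddAbove (Set.range (x t)) := fun t => (hfin t).bddAbove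
  have hml : ∀ t p, m t ≤ x t p := fun t p => csInf_le (hbdd_b t) ⟨p, rfl⟩
  have hMu : ∀ t p, x t p ≤ M t := fun t p => le_csSup (hbdd_a t) ⟨p, rfl⟩
  have hSne : ∀ t p, (x t '' (In (t+1) p : Set (Fin n))).Nonempty :=
    fun t p => ⟨x t p, p, hself (t+1) p, rfl⟩
  have hSfin : ∀ t p, (x t '' (In (t+1) p : Set (Fin n))).Finite :=
    fun t p => Set.Finite.image _ (Set.finite_mem_finset _)
  have hSsub : ∀ t p, x t '' (In (t+1) p : Set (Fin n)) ⊆ Set.range (x t) :=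
    fun t p => Set.image_subset_range _ _
  have hInfge : ∀ t p, m t ≤ sInf (x t '' (In (t+1) p : Set (Fin n))) :=
    fun t p => csInf_le_csInf (hbdd_b t) (hSne t p) (hSsub t p)
  have hSuple : ∀ t p, sSup (x t '' (In (t+1) p : Set (Fin n))) ≤ M t :=
    fun t p => csSup_le_csSup (hbdd_a t) (hSne t p) (hSsub t p)
  have hInfle : ∀ t p r, r ∈ In (t+1) p → sInf (x t '' (In (t+1) p : Set (Fin n))) ≤ x t r :=
    fun t p r hr => csInf_le (hSfin t p).bddBelow ⟨r, hr, rfl⟩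
  have hSupge : ∀ t p r, r ∈ In (t+1) p → x t r ≤ sSup (x t '' (In (t+1) p : Set (Fin n))) :=
    fun t p r hr => le_csSup (hSfin t p).bddAbove ⟨r, hr, rfl⟩
  have hub : ∀ t p, x (t+1) p ≤ M t := fun t p => ((hhull t p).2).trans (hSuple t p)
  have hlb : ∀ t p, m t ≤ x (t+1) p := fun t p => (hInfge t p).trans (hhull t p).1
  have hMmono : ∀ t, M (t+1) ≤ M t := fun t =>
    csSup_le (hne _) (by rintro y ⟨p, rfl⟩; exact hub t p)
  have hmmono : ∀ t, m t ≤ m (t+1) := fun t =>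
    le_csInf (hne _) (by rintro y ⟨p, rfl⟩; exact hlb t p)
  have hmM : ∀ t, m t ≤ M t := fun t => (hml t ⟨0,hn⟩).trans (hMu t ⟨0,hn⟩)
  have hcontr : ∀ t, M (t+1) - m (t+1) ≤ (1-α) * (M t - m t) := by
    intro t
    obtain ⟨p, hp⟩ := (hne (t+1)).csSup_mem (hfin (t+1))
    obtain ⟨q, hq⟩ := (hne (t+1)).csInf_mem (hfin (t+1))
    obtain ⟨r, hrp, hrq⟩ := hnonsplit (t+1) p q
    have h1 : x (t+1) p ≤ (1-α) * M t + α * x t r := by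
      have hu := (hsafe t p).2
      have hs := hSuple t p
      have hi := hInfle t p r hrp
      nlinarith
    have h2 : α * x t r + (1-α) * m t ≤ x (t+1) q := by
      have hl := (hsafe t q).1
      have hs := hSupge t q r hrq
      have hi := hInfge t q
      nlinarith
    have : M (t+1) - m (t+1) = x (t+1) p - x (t+1) q := by rw [hp, hq]
    linarith
  have hgeo : ∀ t, M t - m t ≤ (1-α)^t * (M 0 - m 0) := by
    intro t
    induction t with
    | zero => simp
    | succ t ih =>
      calc M (t+1) - m (t+1) ≤ (1-α) * (M t - m t) := hcontr t
      _ ≤ (1-α) * ((1-α)^t * (M 0 - m 0)) := mul_le_mul_of_nonneg_left ih h1α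
      _ = (1-α)^(t+1) * (M 0 - m 0) := by ring
  have hmmono' : Monotone m := monotone_nat_of_le_succ hmmono
  have hManti : Antitone M := antitone_nat_of_succ_le hMmono
  have hmbdd : BddAbove (Set.range m) := by
    refine ⟨M 0, ?_⟩
    rintro y ⟨t, rfl⟩
    exact (hmM t).trans (hManti (Nat.zero_le t))
  have hmlim : Tendsto m atTop (nhds (⨆ t, m t)) := tendsto_atTop_ciSup hmmono' hmbdd
  set xs : ℝ := ⨆ t, m t with hxs
  have hgap0 : Tendsto (fun t => M t - m t) atTop (nhds 0) := by
    have hpow : Tendsto (fun t : ℕ => (1-α)^t * (M 0 - m 0)) atTop (nhds 0) := by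
      have := (tendsto_pow_atTop_nhds_zero_of_lt_one h1α (by linarith)).mul_const (M 0 - m 0)
      simpa using this
    exact squeeze_zero (fun t => by linarith [hmM t]) hgeo hpow
  have hMlim : Tendsto M atTop (nhds xs) := by
    have := hmlim.add hgap0
    simpa using this.congr (fun t => by ring)
  refine ⟨xs, ?_, ⟨?_, ?_⟩, hgeo⟩
  · intro p
    exact tendsto_of_tendsto_of_tendsto_of_le_of_le hmlim hMlim
      (fun t => hml t p) (fun t => hMu t p)
  · exact le_ciSup hmbdd 0
  · exact le_of_tendsto hmlim (Filter.Eventually.of_forall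
      (fun t => (hmM t).trans (hManti (Nat.zero_le t))))
end

section
/- If an averaging algorithm is α-safe with respect to single rounds, then over macro-rounds consisting of L consecutive rounds it is α^L-safe: for each agent p, the value after L rounds lies in [α^L M + (1−α^L) m, (1−α^L) M + α^L m], where m and M are the minimum and maximum values over the in-neighbors of p in the product graph of the L communication graphs. -/
/-!
Write `m`, `M` for the minimum and maximum of the initial values that a value depends on; being
`α`-safe means lying at distance at least `α (M - m)` from both `m` and `M`. After a further
round the value of `p` lies at least `α (S - m)` above `m`, where `S` is the largest value among
its in-neighbours. One of these neighbours has an `L`-round neighbourhood containing a maximiser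
of the whole `(L + 1)`-round neighbourhood, so by induction `S - m ≥ α ^ L (M - m)`. The bound
below `M` is symmetric.
-/

/-- In-neighbors of `p` over `L` consecutive rounds `t+1, …, t+L`, i.e. in the
product graph `G_{t+1} ∘ ⋯ ∘ G_{t+L}` of the round communication graphs. -/
def inChain {n : ℕ} (In : ℕ → Fin n → Finset (Fin n)) (t : ℕ) :
    ℕ → Fin n → Finset (Fin n)
  | 0, p => {p}
  | L + 1, p => (In (t + L + 1) p).biUnion (inChain In t L)

def safeInterval (α : ℝ) (s : Set ℝ) : Set ℝ :=
  Set.Icc (α * sSup s + (1 - α) * sInf s) ((1 - α) * sSup s + α * sInf s)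

section Gap

variable {β m M v : ℝ} {s : Set ℝ}

lemma mul_sub_le_sub_of_mem_safeInterval_of_le_sInf (hβ : β ≤ 1)
    (hm : m ≤ sInf s) (hv : v ∈ safeInterval β s) : β * (sSup s - m) ≤ v - m := by
  nlinarith [hv.1]

lemma mul_sub_le_sub_of_mem_safeInterval_of_sSup_le (hβ : β ≤ 1)
    (hM : sSup s ≤ M) (hv : v ∈ safeInterval β s) : β * (M - sInf s) ≤ M - v := by
  nlinarith [hv.2]

lemma safeInterval_subset_Icc (hβ : β ∈ Set.Icc 0 1) (hs : sInf s ≤ sSup s) :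
    safeInterval β s ⊆ Set.Icc (sInf s) (sSup s) := fun v hv => by
  constructor
  · nlinarith [mul_sub_le_sub_of_mem_safeInterval_of_le_sInf hβ.2 le_rfl hv, hβ.1]
  · nlinarith [mul_sub_le_sub_of_mem_safeInterval_of_sSup_le hβ.2 le_rfl hv, hβ.1]

end Gap

section Union

variable {ι : Type*} {β : ℝ} {N : Finset ι} {A : ι → Set ℝ} {v : ι → ℝ}

lemma sInf_biUnion_le_sInf_image (hβ : β ∈ Set.Icc 0 1) (hN : N.Nonempty)
    (hAne : ∀ q ∈ N, (A q).Nonempty) (hAfin : ∀ q ∈ N, (A q).Finite)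
    (hv : ∀ q ∈ N, v q ∈ safeInterval β (A q)) :
    sInf (⋃ q ∈ N, A q) ≤ sInf (v '' N) := by
  refine le_csInf (hN.to_set.image v) ?_
  rintro _ ⟨q, hq, rfl⟩
  have hAq := hAfin q hq
  calc sInf (⋃ q ∈ N, A q) ≤ sInf (A q) :=
        csInf_le_csInf (N.finite_toSet.biUnion hAfin).bddBelow (hAne q hq)
          (Set.subset_biUnion_of_mem (u := A) hq)
    _ ≤ v q := (safeInterval_subset_Icc hβ
        (csInf_le_csSup (hAne q hq) hAq.bddBelow hAq.bddAbove) (hv q hq)).1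

lemma sSup_image_le_sSup_biUnion (hβ : β ∈ Set.Icc 0 1) (hN : N.Nonempty)
    (hAne : ∀ q ∈ N, (A q).Nonempty) (hAfin : ∀ q ∈ N, (A q).Finite)
    (hv : ∀ q ∈ N, v q ∈ safeInterval β (A q)) :
    sSup (v '' N) ≤ sSup (⋃ q ∈ N, A q) := by
  refine csSup_le (hN.to_set.image v) ?_
  rintro _ ⟨q, hq, rfl⟩
  have hAq := hAfin q hq
  calc v q ≤ sSup (A q) := (safeInterval_subset_Icc hβ
        (csInf_le_csSup (hAne q hq) hAq.bddBelow hAq.bddAbove) (hv q hq)).2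
    _ ≤ sSup (⋃ q ∈ N, A q) :=
        csSup_le_csSup (N.finite_toSet.biUnion hAfin).bddAbove (hAne q hq)
          (Set.subset_biUnion_of_mem (u := A) hq)

lemma mul_sub_le_sSup_image_sub (hβ : β ∈ Set.Icc 0 1) (hN : N.Nonempty)
    (hAne : ∀ q ∈ N, (A q).Nonempty) (hAfin : ∀ q ∈ N, (A q).Finite)
    (hv : ∀ q ∈ N, v q ∈ safeInterval β (A q)) :
    β * (sSup (⋃ q ∈ N, A q) - sInf (⋃ q ∈ N, A q)) ≤
      sSup (v '' N) - sInf (⋃ q ∈ N, A q) := by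
  set U := ⋃ q ∈ N, A q
  have hUfin : U.Finite := N.finite_toSet.biUnion hAfin
  obtain ⟨q, hq⟩ := hN
  have hUne : U.Nonempty := (hAne q hq).mono (Set.subset_biUnion_of_mem (u := A) hq)
  obtain ⟨q₀, hq₀, hMq₀⟩ : ∃ q ∈ N, sSup U ∈ A q := by
    simpa [U] using hUne.csSup_mem hUfin
  calc β * (sSup U - sInf U) ≤ β * (sSup (A q₀) - sInf U) :=
        mul_le_mul_of_nonneg_left
          (sub_le_sub_right (le_csSup (hAfin q₀ hq₀).bddAbove hMq₀) _) hβ.1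
    _ ≤ v q₀ - sInf U :=
        mul_sub_le_sub_of_mem_safeInterval_of_le_sInf hβ.2
          (csInf_le_csInf hUfin.bddBelow (hAne q₀ hq₀) (Set.subset_biUnion_of_mem (u := A) hq₀))
          (hv q₀ hq₀)
    _ ≤ sSup (v '' N) - sInf U := by
        gcongr
        exact le_csSup (N.finite_toSet.image v).bddAbove (Set.mem_image_of_mem v hq₀)

lemma mul_sub_le_sub_sInf_image (hβ : β ∈ Set.Icc 0 1) (hN : N.Nonempty)
    (hAne : ∀ q ∈ N, (A q).Nonempty) (hAfin : ∀ q ∈ N, (A q).Finite)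
    (hv : ∀ q ∈ N, v q ∈ safeInterval β (A q)) :
    β * (sSup (⋃ q ∈ N, A q) - sInf (⋃ q ∈ N, A q)) ≤
      sSup (⋃ q ∈ N, A q) - sInf (v '' N) := by
  set U := ⋃ q ∈ N, A q
  have hUfin : U.Finite := N.finite_toSet.biUnion hAfin
  obtain ⟨q, hq⟩ := hN
  have hUne : U.Nonempty := (hAne q hq).mono (Set.subset_biUnion_of_mem (u := A) hq)
  obtain ⟨q₁, hq₁, hmq₁⟩ : ∃ q ∈ N, sInf U ∈ A q := by
    simpa [U] using hUne.csInf_mem hUfin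
  calc β * (sSup U - sInf U) ≤ β * (sSup U - sInf (A q₁)) :=
        mul_le_mul_of_nonneg_left
          (sub_le_sub_left (csInf_le (hAfin q₁ hq₁).bddBelow hmq₁) _) hβ.1
    _ ≤ sSup U - v q₁ :=
        mul_sub_le_sub_of_mem_safeInterval_of_sSup_le hβ.2
          (csSup_le_csSup hUfin.bddAbove (hAne q₁ hq₁) (Set.subset_biUnion_of_mem (u := A) hq₁))
          (hv q₁ hq₁)
    _ ≤ sSup U - sInf (v '' N) := by
        gcongr
        exact csInf_le (N.finite_toSet.image v).bddBelow (Set.mem_image_of_mem v hq₁)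

theorem safeInterval_biUnion {α : ℝ} (hα : α ∈ Set.Icc 0 1) (hβ : β ∈ Set.Icc 0 1)
    (hN : N.Nonempty) (hAne : ∀ q ∈ N, (A q).Nonempty) (hAfin : ∀ q ∈ N, (A q).Finite)
    (hv : ∀ q ∈ N, v q ∈ safeInterval β (A q)) {y : ℝ} (hy : y ∈ safeInterval α (v '' N)) :
    y ∈ safeInterval (α * β) (⋃ q ∈ N, A q) := by
  have hIm := sInf_biUnion_le_sInf_image hβ hN hAne hAfin hv
  have hSM := sSup_image_le_sSup_biUnion hβ hN hAne hAfin hv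
  have hS := mul_sub_le_sSup_image_sub hβ hN hAne hAfin hv
  have hI := mul_sub_le_sub_sInf_image hβ hN hAne hAfin hv
  obtain ⟨hy₁, hy₂⟩ := hy
  have h1α : 0 ≤ 1 - α := sub_nonneg.2 hα.2
  constructor
  · nlinarith [mul_le_mul_of_nonneg_left hS hα.1, mul_nonneg h1α (sub_nonneg.2 hIm)]
  · nlinarith [mul_le_mul_of_nonneg_left hI hα.1, mul_nonneg h1α (sub_nonneg.2 hSM)]

end Union

section InChain

variable {n : ℕ} (In : ℕ → Fin n → Finset (Fin n)) (t : ℕ)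

lemma self_mem_inChain (hself : ∀ t p, p ∈ In t p) : ∀ L p, p ∈ inChain In t L p
  | 0, p => Finset.mem_singleton_self p
  | L + 1, p => Finset.mem_biUnion.2 ⟨p, hself _ p, self_mem_inChain hself L p⟩

lemma coe_inChain_succ (L : ℕ) (p : Fin n) :
    (inChain In t (L + 1) p : Set (Fin n)) =
      ⋃ q ∈ In (t + L + 1) p, (inChain In t L q : Set (Fin n)) := by
  simp [inChain]

end InChain

theorem alpha_safe_macro_rounds_general
    (n : ℕ) (α : ℝ) (hα : α ∈ Set.Ioc (0 : ℝ) (1 / 2))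
    (In : ℕ → Fin n → Finset (Fin n))
    (hself : ∀ t p, p ∈ In t p)
    (x : ℕ → Fin n → ℝ)
    (hsafe : ∀ t p, x (t + 1) p ∈ Set.Icc
        (α * sSup (x t '' (In (t + 1) p : Set (Fin n))) +
          (1 - α) * sInf (x t '' (In (t + 1) p : Set (Fin n))))
        ((1 - α) * sSup (x t '' (In (t + 1) p : Set (Fin n))) +
          α * sInf (x t '' (In (t + 1) p : Set (Fin n))))) :
    ∀ t L p, x (t + L) p ∈ Set.Icc
        (α ^ L * sSup (x t '' (inChain In t L p : Set (Fin n))) +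
          (1 - α ^ L) * sInf (x t '' (inChain In t L p : Set (Fin n))))
        ((1 - α ^ L) * sSup (x t '' (inChain In t L p : Set (Fin n))) +
          α ^ L * sInf (x t '' (inChain In t L p : Set (Fin n)))) := by
  intro t L
  have hα' : α ∈ Set.Icc 0 1 := ⟨hα.1.le, hα.2.trans (by norm_num)⟩
  induction L with
  | zero =>
    intro p
    simp [inChain]
  | succ L ih =>
    intro p
    have hstep := safeInterval_biUnion hα' ⟨pow_nonneg hα'.1 L, pow_le_one₀ hα'.1 hα'.2⟩
      ⟨p, hself _ p⟩ (fun q _ => ⟨x t q, Set.mem_image_of_mem _ (self_mem_inChain In t hself L q)⟩)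
      (fun q _ => Set.toFinite _) (fun q _ => ih q) (hsafe (t + L) p)
    rwa [← pow_succ', ← Set.image_iUnion₂, ← coe_inChain_succ] at hstep

theorem alpha_safe_macro_rounds
    (n : ℕ) (hn : 0 < n) (α : ℝ) (hα : α ∈ Set.Ioc (0 : ℝ) (1 / 2))
    (In : ℕ → Fin n → Finset (Fin n))
    (hself : ∀ t p, p ∈ In t p)
    (x : ℕ → Fin n → ℝ)
    (hsafe : ∀ t p, x (t + 1) p ∈ Set.Icc
        (α * sSup (x t '' (In (t + 1) p : Set (Fin n))) +
          (1 - α) * sInf (x t '' (In (t + 1) p : Set (Fin n))))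
        ((1 - α) * sSup (x t '' (In (t + 1) p : Set (Fin n))) +
          α * sInf (x t '' (In (t + 1) p : Set (Fin n))))) :
    ∀ t L p, x (t + L) p ∈ Set.Icc
        (α ^ L * sSup (x t '' (inChain In t L p : Set (Fin n))) +
          (1 - α ^ L) * sInf (x t '' (inChain In t L p : Set (Fin n))))
        ((1 - α ^ L) * sSup (x t '' (inChain In t L p : Set (Fin n))) +
          α ^ L * sInf (x t '' (inChain In t L p : Set (Fin n)))) :=
  alpha_safe_macro_rounds_general n α hα In hself x hsafe
end

section
/- Let A ⊆ ℝ^d be compact convex with vol_d(A) > 0, c = centroid_1(A), and ℓ_A(ξ) = vol_{d−1}(A ∩ {x_1 = ξ})^{1/(d−1)} with m_1(A) = 0. Define ℓ'(ξ) = ξ·ℓ_A(c)/c for ξ ∈ [0,c] and ℓ'(ξ) = ℓ_A(ξ) otherwise. Then ℓ'(ξ) ≤ ℓ_A(ξ) for all ξ ∈ [0,c], and the first centroid coordinate of S(ℓ') is at least that of S(ℓ_A). -/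
/-!
If `(0, q) ∈ A`, convexity puts `(1 - t) • q + t • (slice of A at x)` inside the slice at `t * x`,
so `vol (slice at t x) ≥ tⁿ vol (slice at x)`, i.e. `ℓ_A (t x) ≥ t ℓ_A x`; with `x = c` this is the
first claim (only this cone inequality is needed, not Brunn–Minkowski).

Centroids of first coordinates only see the first marginal. `S(ℓ_A)` has the slice volumes of `A`,
hence its marginal `μ` and centroid `c`. The marginal `ν` of `S(ℓ')` satisfies `ν ≤ μ` with
equality on `(c, ∞)`, so the removed mass sits where `c - x ≥ 0` and
`∫ (c - x) dν ≤ ∫ (c - x) dμ = 0`. Finally `ν ≠ 0`: `μ` has no atom at its centroid, so it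
charges `(c, ∞)`.
-/

open MeasureTheory Set Module
open scoped ENNReal Pointwise

noncomputable section

-- Junk value: `μ.real univ = 0` when `μ = 0` or `μ univ = ∞`, and then the centroid is `0`.
def centroid (μ : Measure ℝ) : ℝ := (∫ x, x ∂μ) / μ.real univ

def fstMarginal {α β : Type*} [MeasurableSpace α] [MeasurableSpace β] (ρ : Measure (α × β))
    (B : Set (α × β)) : Measure α :=
  (ρ.restrict B).map Prod.fst

def cubeBody (n : ℕ) (f : ℝ → ℝ) : Set (ℝ × (Fin n → ℝ)) := {p | ∀ j, |p.2 j| ≤ f p.1 / 2}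

def sliceProfile {n : ℕ} (A : Set (ℝ × (Fin n → ℝ))) (ξ : ℝ) : ℝ :=
  (volume (Prod.mk ξ ⁻¹' A)).toReal ^ (n : ℝ)⁻¹

def linearizedProfile (ℓ : ℝ → ℝ) (c ξ : ℝ) : ℝ := if ξ ∈ Icc 0 c then ξ * ℓ c / c else ℓ ξ

end

section Centroid

variable {μ ν : Measure ℝ} {c : ℝ}

theorem integral_sub_le_of_le_of_restrict_Ioi_eq [IsFiniteMeasure μ] (hνμ : ν ≤ μ)
    (hIoi : ν.restrict (Ioi c) = μ.restrict (Ioi c)) (hμ : Integrable (fun x => x) μ) :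
    ∫ x, (c - x) ∂ν ≤ ∫ x, (c - x) ∂μ := by
  have hf : Integrable (fun x => c - x) μ := (integrable_const c).sub hμ
  rw [← integral_add_compl measurableSet_Ioi hf,
    ← integral_add_compl measurableSet_Ioi (hf.mono_measure hνμ), hIoi]
  gcongr 1
  refine integral_mono_measure (Measure.restrict_mono le_rfl hνμ) ?_ hf.restrict
  filter_upwards [ae_restrict_mem measurableSet_Ioi.compl] with x hx
  simpa using hx

theorem measure_Ioi_ne_zero_of_integral_sub_eq_zero [IsFiniteMeasure μ] [NeZero μ]
    (hμ : Integrable (fun x => x) μ) (hc : μ {c} = 0) (hmean : ∫ x, (c - x) ∂μ = 0) :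
    μ (Ioi c) ≠ 0 := by
  intro hIoi
  have hle : ∀ᵐ x ∂μ, x ≤ c := by
    filter_upwards [measure_eq_zero_iff_ae_notMem.1 hIoi] with x hx
    simpa using hx
  have heq : ∀ᵐ x ∂μ, c - x = 0 :=
    (integral_eq_zero_iff_of_nonneg_ae (by filter_upwards [hle] with x hx; simpa using hx)
      ((integrable_const c).sub hμ)).1 hmean
  have hne : ∀ᵐ x ∂μ, x ≠ c := measure_eq_zero_iff_ae_notMem.1 hc
  refine NeZero.ne μ (ae_eq_bot.1 (Filter.eventually_false_iff_eq_bot.1 ?_))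
  filter_upwards [heq, hne] with x h1 h2
  exact h2 (by linarith)

theorem le_centroid_of_le_of_restrict_Ioi_eq [IsFiniteMeasure μ] [NeZero μ]
    (hμ : Integrable (fun x => x) μ) (hc : centroid μ = c) (hc0 : μ {c} = 0) (hνμ : ν ≤ μ)
    (hIoi : ν.restrict (Ioi c) = μ.restrict (Ioi c)) :
    c ≤ centroid ν := by
  have : IsFiniteMeasure ν := isFiniteMeasure_of_le μ hνμ
  have integral_sub_eq (ρ : Measure ℝ) [IsFiniteMeasure ρ] (hρ : Integrable (fun x => x) ρ) :
      ∫ x, (c - x) ∂ρ = c * ρ.real univ - ∫ x, x ∂ρ := by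
    rw [integral_sub (integrable_const c) hρ, integral_const, smul_eq_mul, mul_comm]
  have hmean : ∫ x, (c - x) ∂μ = 0 := by
    rw [integral_sub_eq μ hμ, ← hc, centroid, div_mul_cancel₀ _ measureReal_univ_ne_zero,
      sub_self]
  have : NeZero ν := ⟨fun hν => measure_Ioi_ne_zero_of_integral_sub_eq_zero hμ hc0 hmean <| by
    rw [← Measure.restrict_apply_univ, ← hIoi, hν, Measure.restrict_zero, Measure.coe_zero,
      Pi.zero_apply]⟩
  have hshift := integral_sub_le_of_le_of_restrict_Ioi_eq hνμ hIoi hμ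
  rw [hmean, integral_sub_eq ν (hμ.mono_measure hνμ)] at hshift
  rw [centroid, le_div_iff₀ measureReal_univ_pos]
  linarith

end Centroid

section FstMarginal

variable {α β : Type*} [MeasurableSpace α] [MeasurableSpace β] {ρ : Measure (α × β)}
  {μ : Measure α} {ν : Measure β} {B B' : Set (α × β)}

theorem centroid_fstMarginal (ρ : Measure (ℝ × β)) (B : Set (ℝ × β)) :
    centroid (fstMarginal ρ B) = (∫ p in B, p.1 ∂ρ) / (ρ B).toReal := by
  rw [centroid, fstMarginal, integral_map (f := fun x : ℝ => x) measurable_fst.aemeasurable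
    aestronglyMeasurable_id, measureReal_def, Measure.map_apply measurable_fst .univ,
    preimage_univ, Measure.restrict_apply_univ]

theorem fstMarginal_mono (h : B ⊆ B') : fstMarginal ρ B ≤ fstMarginal ρ B' :=
  Measure.map_mono (Measure.restrict_mono h le_rfl) measurable_fst

theorem restrict_fstMarginal_congr {s : Set α} (hs : MeasurableSet s)
    (h : Prod.fst ⁻¹' s ∩ B = Prod.fst ⁻¹' s ∩ B') :
    (fstMarginal ρ B).restrict s = (fstMarginal ρ B').restrict s := by
  rw [fstMarginal, fstMarginal, Measure.restrict_map measurable_fst hs,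
    Measure.restrict_map measurable_fst hs, Measure.restrict_restrict (measurable_fst hs),
    Measure.restrict_restrict (measurable_fst hs), h]

theorem fstMarginal_prod_eq_of_measure_slice_eq [SFinite ν] (hB : MeasurableSet B)
    (hB' : MeasurableSet B') (h : ∀ x, ν (Prod.mk x ⁻¹' B) = ν (Prod.mk x ⁻¹' B')) :
    fstMarginal (μ.prod ν) B = fstMarginal (μ.prod ν) B' := by
  ext s hs
  have hs' : MeasurableSet (Prod.fst ⁻¹' s : Set (α × β)) := measurable_fst hs
  rw [fstMarginal, fstMarginal, Measure.map_apply measurable_fst hs,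
    Measure.map_apply measurable_fst hs, Measure.restrict_apply hs', Measure.restrict_apply hs',
    Measure.prod_apply (hs'.inter hB), Measure.prod_apply (hs'.inter hB')]
  congr 1 with x
  by_cases hx : x ∈ s <;> simp [preimage_preimage, hx, h]

theorem fstMarginal_prod_singleton [MeasurableSingletonClass α] [NullSingletonClass μ]
    [SFinite ν] (B : Set (α × β)) (x : α) : fstMarginal (μ.prod ν) B {x} = 0 := by
  have hnull : (μ.prod ν) (Prod.fst ⁻¹' {x}) = 0 := by
    rw [← prod_univ, Measure.prod_prod, measure_singleton, zero_mul]
  rw [fstMarginal, Measure.map_apply measurable_fst (measurableSet_singleton x)]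
  exact nonpos_iff_eq_zero.1 ((Measure.le_iff'.1 Measure.restrict_le_self _).trans_eq hnull)

theorem le_centroid_fstMarginal {μ : Measure ℝ} [NullSingletonClass μ] [SFinite ν]
    {A B : Set (ℝ × β)} {c : ℝ} (hA : μ.prod ν A ≠ ∞) (hA0 : μ.prod ν A ≠ 0)
    (hint : IntegrableOn Prod.fst A (μ.prod ν)) (hc : centroid (fstMarginal (μ.prod ν) A) = c)
    (hBA : fstMarginal (μ.prod ν) B ≤ fstMarginal (μ.prod ν) A)
    (hIoi : (fstMarginal (μ.prod ν) B).restrict (Ioi c) =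
      (fstMarginal (μ.prod ν) A).restrict (Ioi c)) :
    c ≤ centroid (fstMarginal (μ.prod ν) B) := by
  have : IsFiniteMeasure ((μ.prod ν).restrict A) := isFiniteMeasure_restrict.2 hA
  have : IsFiniteMeasure (fstMarginal (μ.prod ν) A) := by rw [fstMarginal]; infer_instance
  have : NeZero (fstMarginal (μ.prod ν) A) := ⟨by
    rw [fstMarginal, Ne, Measure.map_eq_zero_iff measurable_fst.aemeasurable,
      Measure.restrict_eq_zero]
    exact hA0⟩
  refine le_centroid_of_le_of_restrict_Ioi_eq ?_ hc (fstMarginal_prod_singleton A c) hBA hIoi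
  exact (integrable_map_measure aestronglyMeasurable_id measurable_fst.aemeasurable).2 hint

end FstMarginal

section CubeBody

variable {n : ℕ}

theorem cubeBody_mono {f g : ℝ → ℝ} (h : f ≤ g) : cubeBody n f ⊆ cubeBody n g :=
  fun p hp j => (hp j).trans (by linarith [h p.1])

theorem fst_preimage_inter_cubeBody {f g : ℝ → ℝ} {s : Set ℝ} (h : EqOn f g s) :
    Prod.fst ⁻¹' s ∩ cubeBody n f = Prod.fst ⁻¹' s ∩ cubeBody n g := by
  ext p
  simp only [mem_inter_iff, mem_preimage, cubeBody, mem_ofPred_eq, and_congr_right_iff]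
  intro hp
  rw [h hp]

theorem measurableSet_cubeBody {f : ℝ → ℝ} (hf : Measurable f) :
    MeasurableSet (cubeBody n f) := by
  simp only [cubeBody, ofPred_forall]
  exact MeasurableSet.iInter fun j =>
    measurableSet_le measurable_snd.eval.abs ((hf.comp measurable_fst).div_const 2)

theorem volume_slice_cubeBody (f : ℝ → ℝ) (ξ : ℝ) :
    volume (Prod.mk ξ ⁻¹' cubeBody n f) = ENNReal.ofReal (f ξ) ^ n := by
  have : Prod.mk ξ ⁻¹' cubeBody n f = univ.pi fun _ => Icc (-(f ξ / 2)) (f ξ / 2) := by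
    ext y
    simp [cubeBody, abs_le, Pi.le_def, forall_and]
  rw [this, volume_pi_pi, Finset.prod_const, Finset.card_univ, Fintype.card_fin, Real.volume_Icc]
  ring_nf

end CubeBody

theorem IsCompact.exists_mk_sInf_image_fst_mem {β : Type*} [TopologicalSpace β]
    {A : Set (ℝ × β)} (hA : IsCompact A) (hne : A.Nonempty) :
    ∃ q, (sInf (Prod.fst '' A), q) ∈ A := by
  obtain ⟨p, hp, hp1⟩ := (hA.image continuous_fst).sInf_mem (hne.image _)
  exact ⟨p.2, hp1 ▸ hp⟩

theorem IsCompact.preimage_prodMk {α β : Type*} [TopologicalSpace α] [TopologicalSpace β]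
    [T2Space α] [T2Space β] {A : Set (α × β)} (hA : IsCompact A) (x : α) :
    IsCompact (Prod.mk x ⁻¹' A) :=
  (hA.image continuous_snd).of_isClosed_subset (hA.isClosed.preimage (.prodMk_right x))
    fun y hy => ⟨(x, y), hy, rfl⟩

theorem Convex.ofReal_pow_mul_measure_slice_le {E : Type*} [NormedAddCommGroup E]
    [NormedSpace ℝ E] [MeasurableSpace E] [BorelSpace E] [FiniteDimensional ℝ E]
    (μ : Measure E) [μ.IsAddHaarMeasure] {A : Set (ℝ × E)} (hA : Convex ℝ A) {q : E}
    (hq : ((0 : ℝ), q) ∈ A) {t : ℝ} (ht0 : 0 ≤ t) (ht1 : t ≤ 1) (x : ℝ) :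
    ENNReal.ofReal (t ^ finrank ℝ E) * μ (Prod.mk x ⁻¹' A) ≤ μ (Prod.mk (t * x) ⁻¹' A) := by
  have hsub : (1 - t) • q +ᵥ t • (Prod.mk x ⁻¹' A) ⊆ Prod.mk (t * x) ⁻¹' A := by
    rintro _ ⟨_, ⟨y, hy, rfl⟩, rfl⟩
    show (t * x, (1 - t) • q + t • y) ∈ A
    convert hA hy hq ht0 (sub_nonneg.2 ht1) (add_sub_cancel t 1) using 1
    ext <;> simp [add_comm]
  calc ENNReal.ofReal (t ^ finrank ℝ E) * μ (Prod.mk x ⁻¹' A)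
      = μ ((1 - t) • q +ᵥ t • (Prod.mk x ⁻¹' A)) := by
        rw [measure_vadd, Measure.addHaar_smul, abs_of_nonneg (by positivity)]
    _ ≤ μ (Prod.mk (t * x) ⁻¹' A) := measure_mono hsub

section SliceProfile

variable {n : ℕ} {A : Set (ℝ × (Fin n → ℝ))}

theorem measurable_sliceProfile (hA : MeasurableSet A) : Measurable (sliceProfile A) :=
  (measurable_measure_prodMk_left hA).ennreal_toReal.pow_const _

theorem volume_slice_cubeBody_sliceProfile (hn : n ≠ 0) {ξ : ℝ}
    (hA : volume (Prod.mk ξ ⁻¹' A) ≠ ∞) :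
    volume (Prod.mk ξ ⁻¹' cubeBody n (sliceProfile A)) = volume (Prod.mk ξ ⁻¹' A) := by
  rw [volume_slice_cubeBody, sliceProfile, ← ENNReal.ofReal_pow (by positivity),
    ← Real.rpow_natCast, ← Real.rpow_mul ENNReal.toReal_nonneg, inv_mul_cancel₀ (by simpa),
    Real.rpow_one, ENNReal.ofReal_toReal hA]

theorem fstMarginal_cubeBody_sliceProfile (hn : n ≠ 0) (hA : MeasurableSet A)
    (hfin : ∀ ξ, volume (Prod.mk ξ ⁻¹' A) ≠ ∞) :
    fstMarginal volume (cubeBody n (sliceProfile A)) = fstMarginal volume A :=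
  fstMarginal_prod_eq_of_measure_slice_eq (measurableSet_cubeBody (measurable_sliceProfile hA))
    hA fun ξ => volume_slice_cubeBody_sliceProfile hn (hfin ξ)

theorem Convex.mul_sliceProfile_le (hn : n ≠ 0) (hA : Convex ℝ A) {q : Fin n → ℝ}
    (hq : ((0 : ℝ), q) ∈ A) {t x : ℝ} (ht0 : 0 ≤ t) (ht1 : t ≤ 1)
    (hfin : volume (Prod.mk (t * x) ⁻¹' A) ≠ ∞) :
    t * sliceProfile A x ≤ sliceProfile A (t * x) := by
  have key := ENNReal.toReal_mono hfin (hA.ofReal_pow_mul_measure_slice_le volume hq ht0 ht1 x)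
  rw [ENNReal.toReal_mul, ENNReal.toReal_ofReal (by positivity), finrank_fin_fun] at key
  calc t * sliceProfile A x = (t ^ n * (volume (Prod.mk x ⁻¹' A)).toReal) ^ (n : ℝ)⁻¹ := by
        rw [sliceProfile, Real.mul_rpow (by positivity) ENNReal.toReal_nonneg,
          ← Real.rpow_natCast, ← Real.rpow_mul ht0, mul_inv_cancel₀ (by simpa), Real.rpow_one]
    _ ≤ sliceProfile A (t * x) := Real.rpow_le_rpow (by positivity) key (by positivity)

theorem Convex.mul_sliceProfile_div_le (hn : n ≠ 0) (hA : Convex ℝ A) {q : Fin n → ℝ}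
    (hq : ((0 : ℝ), q) ∈ A) {ξ c : ℝ} (hξ : ξ ∈ Icc 0 c)
    (hfin : volume (Prod.mk ξ ⁻¹' A) ≠ ∞) :
    ξ * sliceProfile A c / c ≤ sliceProfile A ξ := by
  rcases eq_or_ne c 0 with rfl | hc
  · rw [div_zero]
    exact Real.rpow_nonneg ENNReal.toReal_nonneg _
  have hc : 0 < c := lt_of_le_of_ne (hξ.1.trans hξ.2) hc.symm
  have htc : ξ / c * c = ξ := div_mul_cancel₀ ξ hc.ne'
  have key := hA.mul_sliceProfile_le hn hq (div_nonneg hξ.1 hc.le) ((div_le_one hc).2 hξ.2)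
    (x := c) (by rwa [htc])
  rwa [htc, ← mul_div_right_comm] at key

end SliceProfile

section LinearizedProfile

variable {ℓ : ℝ → ℝ} {c : ℝ}

theorem linearizedProfile_eqOn_Ioi (ℓ : ℝ → ℝ) (c : ℝ) :
    EqOn (linearizedProfile ℓ c) ℓ (Ioi c) :=
  fun _ hξ => if_neg fun h => (not_le.2 hξ) h.2

theorem linearizedProfile_le (h : ∀ ξ ∈ Icc 0 c, linearizedProfile ℓ c ξ ≤ ℓ ξ) :
    linearizedProfile ℓ c ≤ ℓ := fun ξ => by
  by_cases hξ : ξ ∈ Icc 0 c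
  · exact h ξ hξ
  · rw [linearizedProfile, if_neg hξ]

end LinearizedProfile

theorem linearized_profile_below_and_centroid_moves_right
    (d : ℕ) (hd : 2 ≤ d)
    (A : Set (ℝ × (Fin (d - 1) → ℝ)))
    (hcomp : IsCompact A) (hconv : Convex ℝ A) (hvol : 0 < volume A)
    (hmin : sInf (Prod.fst '' A) = 0)
    (c : ℝ) (hc : c = (∫ p in A, p.1) / (volume A).toReal)
    (ℓA : ℝ → ℝ)
    (hℓA : ∀ ξ, ℓA ξ = (volume {y : Fin (d - 1) → ℝ | (ξ, y) ∈ A}).toReal ^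
        ((1 : ℝ) / (d - 1)))
    (ℓ' : ℝ → ℝ)
    (hℓ' : ∀ ξ, ℓ' ξ = if ξ ∈ Set.Icc 0 c then ξ * ℓA c / c else ℓA ξ)
    (S : (ℝ → ℝ) → Set (ℝ × (Fin (d - 1) → ℝ)))
    (hS : ∀ f, S f = {p : ℝ × (Fin (d - 1) → ℝ) | ∀ j, |p.2 j| ≤ f p.1 / 2}) :
    (∀ ξ ∈ Set.Icc 0 c, ℓ' ξ ≤ ℓA ξ) ∧
    (∫ p in S ℓA, p.1) / (volume (S ℓA)).toReal ≤
      (∫ p in S ℓ', p.1) / (volume (S ℓ')).toReal := by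
  have hn : d - 1 ≠ 0 := by omega
  obtain rfl : ℓA = sliceProfile A := funext fun ξ => by
    rw [hℓA, sliceProfile, one_div, Nat.cast_sub (by omega : 1 ≤ d), Nat.cast_one]
    rfl
  obtain rfl : ℓ' = linearizedProfile (sliceProfile A) c := funext hℓ'
  obtain rfl : S = cubeBody (d - 1) := funext hS
  have hfin (ξ : ℝ) : volume (Prod.mk ξ ⁻¹' A) ≠ ∞ := (hcomp.preimage_prodMk ξ).measure_lt_top.ne
  obtain ⟨q, hq⟩ := hcomp.exists_mk_sInf_image_fst_mem (nonempty_of_measure_ne_zero hvol.ne')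
  rw [hmin] at hq
  have hbelow : ∀ ξ ∈ Icc 0 c, linearizedProfile (sliceProfile A) c ξ ≤ sliceProfile A ξ :=
    fun ξ hξ => by
      rw [linearizedProfile, if_pos hξ]
      exact hconv.mul_sliceProfile_div_le hn hq hξ (hfin ξ)
  refine ⟨hbelow, ?_⟩
  have hμ := fstMarginal_cubeBody_sliceProfile hn hcomp.isClosed.measurableSet hfin
  rw [← centroid_fstMarginal] at hc
  rw [← centroid_fstMarginal, ← centroid_fstMarginal, hμ, ← hc]
  refine le_centroid_fstMarginal hcomp.measure_lt_top.ne hvol.ne'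
    (continuous_fst.continuousOn.integrableOn_compact hcomp) hc.symm ?_ ?_ <;>
    rw [← Measure.volume_eq_prod, ← hμ]
  · exact fstMarginal_mono (cubeBody_mono (linearizedProfile_le hbelow))
  · exact restrict_fstMarginal_congr measurableSet_Ioi
      (fst_preimage_inter_cubeBody (linearizedProfile_eqOn_Ioi _ _))
end
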